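/- Let Γ be a graph in [l] with n = |E₁(Γ)| + |E₂(Γ)| edges whose graphic arrangement A(Γ) has rank at least 3. If n is not divisible by 3, then β_3(Γ) = 0; equivalently, every 3-cocycle η : A(Γ) → 𝔽_3 is constant on A(Γ). -/

import Mathlib

open scoped Classical

noncomputable section

/-- A (candidate) hyperplane in `ℂ^l`: a submodule of `Fin l → ℂ`. -/
abbrev Hyp (l : ℕ) := Submodule ℂ (Fin l → ℂ)

/-- `X` is a rank-2 flat of the central arrangement `A`. -/
def IsRank2Flat {l : ℕ} (A : Finset (Hyp l)) (X : Hyp l) : Prop :=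
  ∃ H ∈ A, ∃ K ∈ A, H ≠ K ∧ X = H ⊓ K

/-- The hyperplanes of `A` containing the flat `X` (so `m_X = (flatHyps A X).card`). -/
def flatHyps {l : ℕ} (A : Finset (Hyp l)) (X : Hyp l) : Finset {H // H ∈ A} :=
  A.attach.filter fun L => X ≤ (L : Hyp l)

/-- `η : A → 𝔽_p` is a `p`-cocycle: for every rank-2 flat `X`, the sum of `η` over `A_X`
vanishes when `p ∣ m_X`, and `η` is constant on `A_X` when `p ∤ m_X`. -/
def IsCocycle {l : ℕ} (p : ℕ) (A : Finset (Hyp l)) (η : {H // H ∈ A} → ZMod p) : Prop :=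
  ∀ X : Hyp l, IsRank2Flat A X →
    ((p ∣ (flatHyps A X).card → ∑ L ∈ flatHyps A X, η L = 0) ∧
     (¬ p ∣ (flatHyps A X).card →
       ∀ H ∈ flatHyps A X, ∀ K ∈ flatHyps A X, η H = η K))

/-- The rank of a central arrangement in `ℂ^l`: the codimension of the intersection of
all its hyperplanes. -/
def arrRank {l : ℕ} (A : Finset (Hyp l)) : ℕ :=
  l - Module.finrank ℂ ↥(A.inf id)

/-- A graph `Γ` in `[l]`: loops `E₁(Γ) ⊆ [l]`, and signed edges `ij^ε` (recorded with
`i < j`, the sign `ε` encoded by a `Bool`: `true ↦ +1`, `false ↦ -1`); a pair `{i,j}`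
may carry one signed edge (a simple edge) or both (a double edge). -/
structure SGraph (l : ℕ) where
  loops : Finset (Fin l)
  edges : Finset (Fin l × Fin l × Bool)
  edges_lt : ∀ e ∈ edges, e.1 < e.2.1

/-- The hyperplane `x_i = 0` of a loop at `i`. -/
def loopHyp {l : ℕ} (i : Fin l) : Hyp l :=
  LinearMap.ker (LinearMap.proj i : (Fin l → ℂ) →ₗ[ℂ] ℂ)

/-- The hyperplane `x_i + ε·x_j = 0` of a signed edge `ij^ε`. -/
def edgeHyp {l : ℕ} (i j : Fin l) (b : Bool) : Hyp l :=
  LinearMap.ker ((LinearMap.proj i : (Fin l → ℂ) →ₗ[ℂ] ℂ)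
    + (if b then (1 : ℂ) else -1) • (LinearMap.proj j : (Fin l → ℂ) →ₗ[ℂ] ℂ))

/-- The graphic arrangement `A(Γ)` in `ℂ^l`. -/
def graphArr {l : ℕ} (G : SGraph l) : Finset (Hyp l) :=
  G.loops.image loopHyp ∪ G.edges.image fun e => edgeHyp e.1 e.2.1 e.2.2

/-- The (unordered) signed edge `ij^ε` belongs to `Γ`. -/
def SGraph.hasEdge {l : ℕ} (G : SGraph l) (i j : Fin l) (b : Bool) : Prop :=
  (i, j, b) ∈ G.edges ∨ (j, i, b) ∈ G.edges


/-!
If a `3`-cocycle `η` takes two different values, count for each `c ∈ 𝔽₃` the hyperplanes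
`N_c = #{H | η H = c}`. Fix a hyperplane `K`: every other hyperplane `H` lies in exactly one
rank-2 flat `K ∩ H` inside `K`, and on such a flat the cocycle condition forces the local
counts of the two values different from `η K` to agree mod `3` (when `3 ∣ m_X` because
`∑ n_c = ∑ c n_c = 0` in `𝔽₃`, otherwise because both vanish). Summing over the flats in `K`,
`N_a ≡ N_b` for `a, b ≠ η K`. Doing this for two hyperplanes with different values shows that
all `N_c` agree mod `3`. The hyperplanes of `A(Γ)` are pairwise distinct, so
`n = |A(Γ)| = N_0 + N_1 + N_2 ≡ 0`.
-/

section GraphicArrangement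

variable {l : ℕ}

lemma mem_loopHyp {x : Fin l → ℂ} {i : Fin l} : x ∈ loopHyp i ↔ x i = 0 := by
  simp [loopHyp]

lemma mem_edgeHyp {x : Fin l → ℂ} {i j : Fin l} {b : Bool} :
    x ∈ edgeHyp i j b ↔ x i + (if b then 1 else -1) * x j = 0 := by
  cases b <;> simp [edgeHyp]

lemma single_mem_loopHyp_iff {t i : Fin l} : Pi.single t (1 : ℂ) ∈ loopHyp i ↔ t ≠ i := by
  rw [mem_loopHyp]
  rcases eq_or_ne t i with rfl | h <;> simp [*]

lemma single_mem_edgeHyp_iff {t i j : Fin l} {b : Bool} (hij : i ≠ j) :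
    Pi.single t (1 : ℂ) ∈ edgeHyp i j b ↔ t ≠ i ∧ t ≠ j := by
  rw [mem_edgeHyp]
  rcases eq_or_ne t i with rfl | hi
  · simp [Pi.single_eq_of_ne' hij]
  rcases eq_or_ne t j with rfl | hj
  · cases b <;> simp [Pi.single_eq_of_ne' hi]
  · simp [hi, hj]

lemma loopHyp_injective : Function.Injective (loopHyp (l := l)) := by
  intro i j h
  by_contra hij
  have : Pi.single j (1 : ℂ) ∈ loopHyp i := single_mem_loopHyp_iff.2 (Ne.symm hij)
  exact single_mem_loopHyp_iff.1 (h ▸ this) rfl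

lemma loopHyp_ne_edgeHyp {t i j : Fin l} {b : Bool} (hij : i ≠ j) :
    loopHyp t ≠ edgeHyp i j b := by
  intro h
  have hsupp : ∀ s, s ≠ t ↔ s ≠ i ∧ s ≠ j := fun s => by
    rw [← single_mem_loopHyp_iff, ← single_mem_edgeHyp_iff hij, h]
  have hi := (hsupp i).not.2 (by simp)
  have hj := (hsupp j).not.2 (by simp)
  exact hij ((not_not.1 hi).trans (not_not.1 hj).symm)

lemma edgeHyp_inj {i j i' j' : Fin l} {b b' : Bool} (hij : i < j) (hij' : i' < j')
    (h : edgeHyp i j b = edgeHyp i' j' b') : i = i' ∧ j = j' ∧ b = b' := by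
  have hsupp : ∀ t, t ≠ i ∧ t ≠ j ↔ t ≠ i' ∧ t ≠ j' := fun t => by
    rw [← single_mem_edgeHyp_iff hij.ne, ← single_mem_edgeHyp_iff hij'.ne, h]
  have k1 := (hsupp i).not.1 (by simp)
  have k2 := (hsupp j).not.1 (by simp)
  have k3 := (hsupp i').not.2 (by simp)
  have k4 := (hsupp j').not.2 (by simp)
  simp only [not_and_or, not_not] at k1 k2 k3 k4
  obtain ⟨rfl, rfl⟩ : i = i' ∧ j = j' := by
    rcases k1 with rfl | rfl <;> rcases k2 with rfl | rfl <;> simp_all [lt_asymm hij]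
  refine ⟨rfl, rfl, ?_⟩
  -- `x = e_j - ε e_i` lies on `x_i + ε x_j = 0`, and on `x_i + ε' x_j = 0` only if `ε = ε'`
  have hx : Pi.single j 1 - Pi.single i (if b then 1 else -1) ∈ edgeHyp i j b' := by
    rw [← h, mem_edgeHyp]
    simp [hij.ne]
  revert hx
  cases b <;> cases b' <;> norm_num [mem_edgeHyp, hij.ne, hij.ne']

lemma card_graphArr (G : SGraph l) : (graphArr G).card = G.loops.card + G.edges.card := by
  rw [graphArr, Finset.card_union_of_disjoint, Finset.card_image_of_injective _ loopHyp_injective,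
    Finset.card_image_of_injOn]
  · intro e he e' he' h
    obtain ⟨h1, h2, h3⟩ := edgeHyp_inj (G.edges_lt e he) (G.edges_lt e' he') h
    exact Prod.ext h1 (Prod.ext h2 h3)
  · rw [Finset.disjoint_left]
    rintro H hloop hedge
    obtain ⟨i, -, rfl⟩ := Finset.mem_image.1 hloop
    obtain ⟨e, he, heq⟩ := Finset.mem_image.1 hedge
    exact loopHyp_ne_edgeHyp (G.edges_lt e he).ne heq.symm

lemma isCoatom_of_mem_graphArr {G : SGraph l} {H : Hyp l} (hH : H ∈ graphArr G) :
    IsCoatom H := by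
  rcases Finset.mem_union.1 hH with hH | hH
  · obtain ⟨i, -, rfl⟩ := Finset.mem_image.1 hH
    exact LinearMap.isCoatom_ker_of_surjective fun c => ⟨Pi.single i c, by simp⟩
  · obtain ⟨⟨i, j, b⟩, he, rfl⟩ := Finset.mem_image.1 hH
    have hji : j ≠ i := (G.edges_lt _ he).ne'
    exact LinearMap.isCoatom_ker_of_surjective fun c =>
      ⟨Pi.single i c, by cases b <;> simp [Pi.single_eq_of_ne hji]⟩

end GraphicArrangement

lemma inf_eq_inf_of_isCoatom {α : Type*} [Lattice α] [BoundedOrder α] [IsLowerModularLattice α]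
    {K H H' : α} (hK : IsCoatom K) (hH : IsCoatom H) (hH' : H' ≠ ⊤) (hHK : H ≠ K)
    (hH'K : H' ≠ K) (hle : K ⊓ H ≤ H') : K ⊓ H' = K ⊓ H := by
  have hcov : K ⊓ H ⋖ K := by
    rw [inf_comm]
    exact inf_covBy_of_covBy_sup_left (by rw [hH.sup_eq_top_of_ne hK hHK]; exact hH.covBy_top)
  refine ((hcov.eq_or_eq (le_inf inf_le_left hle) inf_le_left).resolve_right fun h => hH'K ?_)
  exact (hK.le_iff_eq hH').1 (inf_eq_left.1 h)

lemma ZMod.three_eq_of_sum_eq_zero_of_sum_mul_eq_zero (g : ZMod 3 → ZMod 3)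
    (hsum : ∑ c, g c = 0) (hmul : ∑ c, g c * c = 0) (a b : ZMod 3) : g a = g b := by
  revert g a b
  decide

lemma ZMod.three_eq_of_eq_off_of_eq_off (g : ZMod 3 → ZMod 3) {v w : ZMod 3} (hvw : v ≠ w)
    (hv : ∀ a b, a ≠ v → b ≠ v → g a = g b) (hw : ∀ a b, a ≠ w → b ≠ w → g a = g b)
    (a b : ZMod 3) : g a = g b := by
  have key : ∀ (g : ZMod 3 → ZMod 3) (v w : ZMod 3), (∀ a b, a ≠ v → b ≠ v → g a = g b) →
      (∀ a b, a ≠ w → b ≠ w → g a = g b) → v = w ∨ ∀ a b, g a = g b := by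
    decide
  exact (key g v w hv hw).resolve_left hvw a b

section ValueCount

variable {ι : Type*} {p : ℕ}

def valueCount (s : Finset ι) (η : ι → ZMod p) (c : ZMod p) : ZMod p :=
  ((s.filter fun x => η x = c).card : ZMod p)

variable [NeZero p] (s : Finset ι) (η : ι → ZMod p)

lemma sum_valueCount : ∑ c, valueCount s η c = s.card := by
  rw [Finset.card_eq_sum_card_fiberwise fun x _ => Finset.mem_univ (η x)]
  push_cast
  rfl

lemma sum_valueCount_mul : ∑ c, valueCount s η c * c = ∑ x ∈ s, η x := by
  rw [← Finset.sum_fiberwise_of_maps_to (fun x _ => Finset.mem_univ (η x)) η]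
  refine Finset.sum_congr rfl fun c _ => ?_
  rw [Finset.sum_congr rfl fun x hx => (Finset.mem_filter.1 hx).2, Finset.sum_const,
    nsmul_eq_mul, valueCount]

end ValueCount

section Cocycle

variable {l : ℕ} {A : Finset (Hyp l)} {η : {H // H ∈ A} → ZMod 3}

def flatsOn (A : Finset (Hyp l)) (K : {H // H ∈ A}) : Finset (Hyp l) :=
  (A.attach.filter fun H => H ≠ K).image fun H => K.1 ⊓ H.1

lemma valueCount_flatHyps_eq (hη : IsCocycle 3 A η) {X : Hyp l} (hX : IsRank2Flat A X)
    {K : {H // H ∈ A}} (hK : K ∈ flatHyps A X) {a b : ZMod 3} (ha : a ≠ η K) (hb : b ≠ η K) :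
    valueCount (flatHyps A X) η a = valueCount (flatHyps A X) η b := by
  obtain ⟨hsum, hconst⟩ := hη X hX
  by_cases hdvd : 3 ∣ (flatHyps A X).card
  · refine ZMod.three_eq_of_sum_eq_zero_of_sum_mul_eq_zero _ ?_ ?_ a b
    · rw [sum_valueCount, (ZMod.natCast_eq_zero_iff _ 3).2 hdvd]
    · rw [sum_valueCount_mul, hsum hdvd]
  · have hnone : ∀ c, c ≠ η K → valueCount (flatHyps A X) η c = 0 := fun c hc => by
      rw [valueCount, Finset.filter_false_of_mem fun H hH (hHc : η H = c) =>
        hc (hHc ▸ hconst hdvd H hH K hK), Finset.card_empty, Nat.cast_zero]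
    rw [hnone a ha, hnone b hb]

lemma valueCount_attach_eq_sum_flatsOn (hA : ∀ H ∈ A, IsCoatom H) (K : {H // H ∈ A})
    {c : ZMod 3} (hc : c ≠ η K) :
    valueCount A.attach η c = ∑ X ∈ flatsOn A K, valueCount (flatHyps A X) η c := by
  have hmaps : Set.MapsTo (fun H : {H // H ∈ A} => K.1 ⊓ H.1)
      ↑(A.attach.filter fun H => η H = c) ↑(flatsOn A K) := fun H hH =>
    Finset.mem_image_of_mem _ (Finset.mem_filter.2 ⟨Finset.mem_attach _ _,
      by rintro rfl; exact hc (Finset.mem_filter.1 hH).2.symm⟩)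
  rw [valueCount, Finset.card_eq_sum_card_fiberwise hmaps, Nat.cast_sum]
  refine Finset.sum_congr rfl fun X hX => ?_
  obtain ⟨H₁, hH₁, rfl⟩ := Finset.mem_image.1 hX
  have hH₁K : H₁.1 ≠ K.1 := Subtype.coe_ne_coe.2 (Finset.mem_filter.1 hH₁).2
  rw [valueCount, Finset.filter_filter]
  congr 2
  ext H
  simp only [flatHyps, Finset.mem_filter, Finset.mem_attach, true_and]
  constructor
  · rintro ⟨hHc, hHX⟩
    exact ⟨hHX ▸ inf_le_right, hHc⟩
  · rintro ⟨hle, hHc⟩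
    have hHK : H.1 ≠ K.1 := fun h => hc (hHc ▸ congrArg η (Subtype.ext h))
    exact ⟨hHc, inf_eq_inf_of_isCoatom (hA _ K.2) (hA _ H₁.2) (hA _ H.2).1 hH₁K hHK hle⟩

lemma valueCount_attach_eq (hA : ∀ H ∈ A, IsCoatom H) (hη : IsCocycle 3 A η)
    (K : {H // H ∈ A}) {a b : ZMod 3} (ha : a ≠ η K) (hb : b ≠ η K) :
    valueCount A.attach η a = valueCount A.attach η b := by
  rw [valueCount_attach_eq_sum_flatsOn hA K ha, valueCount_attach_eq_sum_flatsOn hA K hb]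
  refine Finset.sum_congr rfl fun X hX => ?_
  obtain ⟨H, hH, rfl⟩ := Finset.mem_image.1 hX
  have hflat : IsRank2Flat A (K.1 ⊓ H.1) :=
    ⟨K.1, K.2, H.1, H.2, fun h => (Finset.mem_filter.1 hH).2 (Subtype.ext h.symm), rfl⟩
  exact valueCount_flatHyps_eq hη hflat
    (Finset.mem_filter.2 ⟨Finset.mem_attach _ _, inf_le_left⟩) ha hb

lemma IsCocycle.three_dvd_card_of_ne (hη : IsCocycle 3 A η) (hA : ∀ H ∈ A, IsCoatom H)
    {H K : {H // H ∈ A}} (hne : η H ≠ η K) : 3 ∣ A.card := by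
  have hconst := ZMod.three_eq_of_eq_off_of_eq_off (valueCount A.attach η) hne
    (fun _ _ => valueCount_attach_eq hA hη H) (fun _ _ => valueCount_attach_eq hA hη K)
  rw [← ZMod.natCast_eq_zero_iff, ← Finset.card_attach, ← sum_valueCount,
    Finset.sum_congr rfl fun c _ => hconst c 0, Finset.sum_const, Finset.card_univ, ZMod.card,
    nsmul_eq_mul, ZMod.natCast_self, zero_mul]

end Cocycle

theorem beta3_vanishes_of_not_dvd_general {l : ℕ} (G : SGraph l)
    (hn : ¬ (3 ∣ (G.loops.card + G.edges.card)))
    (η : {H // H ∈ graphArr G} → ZMod 3) (hη : IsCocycle 3 (graphArr G) η) :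
    ∀ H K : {H // H ∈ graphArr G}, η H = η K := by
  intro H K
  by_contra hne
  rw [← card_graphArr] at hn
  exact hn (hη.three_dvd_card_of_ne (fun _ => isCoatom_of_mem_graphArr) hne)

/-- Let `Γ` be a graph in `[l]` with `n = |E₁(Γ)| + |E₂(Γ)|` edges whose graphic
arrangement `A(Γ)` has rank at least 3. If `3 ∤ n`, then every 3-cocycle
`η : A(Γ) → 𝔽₃` is constant on `A(Γ)`; that is, `β₃(Γ) = 0`. -/
theorem beta3_vanishes_of_not_dvd {l : ℕ} (G : SGraph l)
    (hrk : 3 ≤ arrRank (graphArr G))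
    (hn : ¬ (3 ∣ (G.loops.card + G.edges.card)))
    (η : {H // H ∈ graphArr G} → ZMod 3) (hη : IsCocycle 3 (graphArr G) η) :
    ∀ H K : {H // H ∈ graphArr G}, η H = η K :=
  beta3_vanishes_of_not_dvd_general G hn η hη
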